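/- arXiv:1809.11165 — 2 statements merged into one kernel-verified Lean document; each statement's English description precedes it below -/
import Mathlib

section
/- If z has i.i.d. Rademacher entries and A ∈ ℝ^{n×n} is symmetric, then Var(zᵀ A z) = 2 ∑_{i≠j} A_{ij}². -/
/-!
With `zᵢ = ±1` we have `zᵀ A z = ∑ᵢⱼ Aᵢⱼ zᵢ zⱼ`, so only the moments `E[zᵢ zⱼ] = δᵢⱼ` and
`E[zᵢ zⱼ zₖ zₗ] = δᵢⱼ δₖₗ + δᵢₖ δⱼₗ + δᵢₗ δⱼₖ - 2 δᵢⱼₖₗ` enter (the Gaussian pairing formula,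
corrected by the fourth cumulant `-2` of a random sign). Both follow from `zᵢ² = 1` and from the
fact that flipping `εᵢ` negates `zᵢ`, so `E[zᵢ f] = 0` whenever `f` ignores `εᵢ`. Contracting with
`A ⊗ A` gives `Var(zᵀ A z) = ∑ᵢⱼ Aᵢⱼ (Aᵢⱼ + Aⱼᵢ) - 2 ∑ᵢ Aᵢᵢ²`.
-/

open Matrix Finset

def boolSign (b : Bool) : ℝ := if b then 1 else -1

@[simp]
lemma boolSign_mul_self (b : Bool) : boolSign b * boolSign b = 1 := by
  cases b <;> simp [boolSign]

@[simp]
lemma boolSign_not (b : Bool) : boolSign (!b) = -boolSign b := by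
  cases b <;> simp [boolSign]

lemma Matrix.dotProduct_mulVec_self {ι R : Type*} [Fintype ι] [CommSemiring R]
    (A : Matrix ι ι R) (v : ι → R) :
    v ⬝ᵥ A *ᵥ v = ∑ i, ∑ j, A i j * (v i * v j) := by
  simp only [dotProduct, mulVec, mul_sum]
  exact sum_congr rfl fun i _ => sum_congr rfl fun j _ => by ring

section

variable {ι : Type*} [Fintype ι] [DecidableEq ι]

lemma sum_boolSign_mul_eq_zero (i : ι) (f : (ι → Bool) → ℝ)
    (hf : ∀ ε, f (Function.update ε i (!ε i)) = f ε) :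
    ∑ ε : ι → Bool, boolSign (ε i) * f ε = 0 := by
  have flip : Function.Involutive fun ε : ι → Bool => Function.update ε i (!ε i) := by
    intro ε
    simp
  have h := Equiv.sum_comp (flip.toPerm _) fun ε => boolSign (ε i) * f ε
  simp only [Function.Involutive.coe_toPerm, Function.update_self, boolSign_not, hf, neg_mul,
    sum_neg_distrib] at h
  linarith

lemma sum_boolSign_mul_boolSign (i j : ι) :
    ∑ ε : ι → Bool, boolSign (ε i) * boolSign (ε j) =
      if i = j then (2 : ℝ) ^ Fintype.card ι else 0 := by
  split_ifs with hij
  · subst hij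
    simp
  · exact sum_boolSign_mul_eq_zero i _ fun ε => by rw [Function.update_of_ne (Ne.symm hij)]

lemma sum_boolSign_mul_boolSign_mul_boolSign_mul_boolSign (i j k l : ι) :
    ∑ ε : ι → Bool, boolSign (ε i) * boolSign (ε j) * boolSign (ε k) * boolSign (ε l) =
      (2 : ℝ) ^ Fintype.card ι * ((if i = j ∧ k = l then 1 else 0) +
        (if i = k ∧ j = l then 1 else 0) + (if i = l ∧ j = k then 1 else 0) -
        2 * (if i = j ∧ j = k ∧ k = l then 1 else 0)) := by
  by_cases hij : i = j
  · subst hij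
    simp only [boolSign_mul_self, one_mul, sum_boolSign_mul_boolSign]
    split_ifs <;> grind
  by_cases hik : i = k
  · subst hik
    have cancel : ∀ ε : ι → Bool,
        boolSign (ε i) * boolSign (ε j) * boolSign (ε i) * boolSign (ε l) =
          boolSign (ε j) * boolSign (ε l) := fun ε => by
      linear_combination boolSign (ε j) * boolSign (ε l) * boolSign_mul_self (ε i)
    simp only [cancel, sum_boolSign_mul_boolSign]
    split_ifs <;> grind
  by_cases hil : i = l
  · subst hil
    have cancel : ∀ ε : ι → Bool,
        boolSign (ε i) * boolSign (ε j) * boolSign (ε k) * boolSign (ε i) =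
          boolSign (ε j) * boolSign (ε k) := fun ε => by
      linear_combination boolSign (ε j) * boolSign (ε k) * boolSign_mul_self (ε i)
    simp only [cancel, sum_boolSign_mul_boolSign]
    split_ifs <;> grind
  simp only [hij, hik, hil, false_and, if_false, add_zero, mul_zero, sub_zero, mul_assoc]
  exact sum_boolSign_mul_eq_zero i _ fun ε => by
    rw [Function.update_of_ne (Ne.symm hij), Function.update_of_ne (Ne.symm hik),
      Function.update_of_ne (Ne.symm hil)]

lemma sum_quadForm_boolSign (A : Matrix ι ι ℝ) :
    ∑ ε : ι → Bool, (fun i => boolSign (ε i)) ⬝ᵥ A *ᵥ (fun i => boolSign (ε i)) =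
      2 ^ Fintype.card ι * A.trace := by
  simp only [dotProduct_mulVec_self]
  rw [sum_comm]
  simp_rw [sum_comm (γ := ι → Bool), ← mul_sum, sum_boolSign_mul_boolSign]
  simp [trace, mul_sum, mul_comm]

lemma sum_quadForm_boolSign_sq (A : Matrix ι ι ℝ) :
    ∑ ε : ι → Bool, ((fun i => boolSign (ε i)) ⬝ᵥ A *ᵥ (fun i => boolSign (ε i))) ^ 2 =
      2 ^ Fintype.card ι *
        (A.trace ^ 2 + ∑ i, ∑ j, A i j * (A i j + A j i) - 2 * ∑ i, A i i ^ 2) := by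
  have expand : ∀ v : ι → ℝ, (v ⬝ᵥ A *ᵥ v) ^ 2 =
      ∑ i, ∑ j, ∑ k, ∑ l, A i j * A k l * (v i * v j * v k * v l) := fun v => by
    simp only [dotProduct_mulVec_self, sq, sum_mul]
    simp only [mul_sum]
    exact sum_congr rfl fun i _ => sum_congr rfl fun j _ =>
      sum_congr rfl fun k _ => sum_congr rfl fun l _ => by ring
  simp only [expand]
  rw [sum_comm]
  simp_rw [sum_comm (γ := ι → Bool), ← mul_sum,
    sum_boolSign_mul_boolSign_mul_boolSign_mul_boolSign]
  simp only [ite_and, mul_ite, mul_one, mul_zero, mul_sub, mul_add, sum_sub_distrib,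
    sum_add_distrib, sum_ite_irrel, sum_ite_eq, mem_univ, ↓reduceIte, sum_const_zero, trace,
    diag_apply, sq, sum_mul_sum]
  simp only [mul_sum]
  ring_nf

theorem variance_quadForm_boolSign (A : Matrix ι ι ℝ) :
    ((2 : ℝ) ^ Fintype.card ι)⁻¹ *
        ∑ ε : ι → Bool, ((fun i => boolSign (ε i)) ⬝ᵥ A *ᵥ (fun i => boolSign (ε i))) ^ 2 -
      (((2 : ℝ) ^ Fintype.card ι)⁻¹ *
        ∑ ε : ι → Bool, (fun i => boolSign (ε i)) ⬝ᵥ A *ᵥ (fun i => boolSign (ε i))) ^ 2 =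
      ∑ i, ∑ j ∈ univ \ {i}, A i j * (A i j + A j i) := by
  have h2 : (2 : ℝ) ^ Fintype.card ι ≠ 0 := by positivity
  have split_diag : ∀ i, ∑ j, A i j * (A i j + A j i) =
      ∑ j ∈ univ \ {i}, A i j * (A i j + A j i) + 2 * A i i ^ 2 := fun i => by
    rw [← sum_sdiff (subset_univ {i}), sum_singleton]
    ring
  rw [sum_quadForm_boolSign_sq, sum_quadForm_boolSign, inv_mul_cancel_left₀ h2,
    inv_mul_cancel_left₀ h2]
  simp only [split_diag, sum_add_distrib, ← mul_sum]
  ring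

end

/-- Variance of the Hutchinson estimator with Rademacher probes: if `z` has i.i.d. Rademacher
entries (encoded by averaging over all `ε : Fin n → Bool`) and `A` is symmetric, then
`Var(zᵀ A z) = 2 ∑_{i ≠ j} A_{ij}²`. -/
theorem rademacher_hutchinson_variance {n : ℕ}
    (A : Matrix (Fin n) (Fin n) ℝ) (hA : A.IsSymm) :
    ((2 : ℝ) ^ n)⁻¹ * (∑ ε : Fin n → Bool,
        ((fun i => if ε i then (1 : ℝ) else -1) ⬝ᵥ
          A.mulVec (fun i => if ε i then (1 : ℝ) else -1)) ^ 2)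
      - (((2 : ℝ) ^ n)⁻¹ * ∑ ε : Fin n → Bool,
        (fun i => if ε i then (1 : ℝ) else -1) ⬝ᵥ
          A.mulVec (fun i => if ε i then (1 : ℝ) else -1)) ^ 2
      = 2 * ∑ i : Fin n, ∑ j ∈ Finset.univ \ {i}, (A i j) ^ 2 := by
  have h := variance_quadForm_boolSign A
  rw [Fintype.card_fin] at h
  refine h.trans ?_
  simp only [hA.apply, mul_sum]
  exact sum_congr rfl fun i _ => sum_congr rfl fun j _ => by ring
end

section
/- Let K = K_XX + σ² I where K_XX is symmetric positive semidefinite, and let P̂ = P + σ² I where P is symmetric positive semidefinite with E := K_XX − P. If ‖E‖₂ ≤ ε, then every eigenvalue λ of P̂^{-1/2} K P̂^{-1/2} satisfies 1 − ε/σ² ≤ λ ≤ 1 + ε/σ², and hence for ε < σ², the condition number satisfies κ(P̂⁻¹ K) ≤ (1 + ε/σ²)/(1 − ε/σ²). -/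
/-!
Write `P̂ = P + σ² I` and `t = ε / σ²`. In the Loewner order `-ε I ≤ K - P̂ ≤ ε I`, and
`ε I ≤ t P̂` because `P ≥ 0`; hence `(1 - t) P̂ ≤ K ≤ (1 + t) P̂`. Conjugating by `S⁻¹`,
where `S` is a symmetric square root of `P̂`, gives `(1 - t) I ≤ S⁻¹ K S⁻¹ ≤ (1 + t) I`,
which is the eigenvalue bound; the bound on the condition number follows.
-/

open Matrix Finset
open scoped MatrixOrder

namespace Matrix

variable {𝕜 n : Type*} [RCLike 𝕜] [Fintype n] [DecidableEq n]

lemma IsHermitian.smul_one_le_iff {A : Matrix n n 𝕜} (hA : A.IsHermitian) {r : ℝ} :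
    r • (1 : Matrix n n 𝕜) ≤ A ↔ ∀ i, r ≤ hA.eigenvalues i := by
  rw [← Algebra.algebraMap_eq_smul_one, algebraMap_le_iff_le_spectrum (ha := hA.isSelfAdjoint),
    hA.spectrum_real_eq_range_eigenvalues, Set.forall_mem_range]

lemma IsHermitian.le_smul_one_iff {A : Matrix n n 𝕜} (hA : A.IsHermitian) {r : ℝ} :
    A ≤ r • (1 : Matrix n n 𝕜) ↔ ∀ i, hA.eigenvalues i ≤ r := by
  rw [← Algebra.algebraMap_eq_smul_one, le_algebraMap_iff_spectrum_le (ha := hA.isSelfAdjoint),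
    hA.spectrum_real_eq_range_eigenvalues, Set.forall_mem_range]

lemma IsHermitian.mem_Icc_smul_one_iff {A : Matrix n n 𝕜} (hA : A.IsHermitian) {a b : ℝ} :
    A ∈ Set.Icc (a • (1 : Matrix n n 𝕜)) (b • 1) ↔ ∀ i, hA.eigenvalues i ∈ Set.Icc a b := by
  simp only [Set.mem_Icc, hA.smul_one_le_iff, hA.le_smul_one_iff, forall_and]

lemma add_smul_one_mem_Icc_of_sub_mem_Icc {K P : Matrix n n 𝕜} {c ε : ℝ} (hP : 0 ≤ P)
    (hc : 0 < c) (hε : 0 ≤ ε) (hKP : K - P ∈ Set.Icc (-ε • (1 : Matrix n n 𝕜)) (ε • 1)) :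
    K + c • 1 ∈ Set.Icc ((1 - ε / c) • (P + c • 1)) ((1 + ε / c) • (P + c • 1)) := by
  have hεP : ε • (1 : Matrix n n 𝕜) ≤ (ε / c) • (P + c • 1) := by
    rw [smul_add, smul_smul, div_mul_cancel₀ ε hc.ne']
    exact le_add_of_nonneg_left (smul_nonneg (div_nonneg hε hc.le) hP)
  have hK : K + c • 1 = (P + c • 1) + (K - P) := by abel
  rw [hK, add_smul, sub_smul, one_smul]
  constructor
  · calc (P + c • 1) - (ε / c) • (P + c • 1)
        ≤ (P + c • 1) + -ε • (1 : Matrix n n 𝕜) := by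
          rw [neg_smul, ← sub_eq_add_neg]
          exact sub_le_sub_left hεP _
      _ ≤ (P + c • 1) + (K - P) := add_le_add_right hKP.1 _
  · exact add_le_add_right (hKP.2.trans hεP) _

lemma IsHermitian.inv_mul_mul_inv_mem_Icc {S K : Matrix n n 𝕜} (hS : S.IsHermitian)
    (hSu : IsUnit S) {a b : ℝ} (hK : K ∈ Set.Icc (a • (S * S)) (b • (S * S))) :
    S⁻¹ * K * S⁻¹ ∈ Set.Icc (a • (1 : Matrix n n 𝕜)) (b • 1) := by
  have hdet : IsUnit S.det := (isUnit_iff_isUnit_det S).1 hSu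
  have hconj (r : ℝ) : S⁻¹ * (r • (S * S)) * S⁻¹ = r • (1 : Matrix n n 𝕜) := by
    rw [mul_smul_comm, smul_mul_assoc, ← mul_assoc, nonsing_inv_mul _ hdet, one_mul,
      mul_nonsing_inv _ hdet]
  have hstar : star S⁻¹ = S⁻¹ := hS.inv.eq
  have hlo := star_left_conjugate_le_conjugate hK.1 S⁻¹
  have hhi := star_left_conjugate_le_conjugate hK.2 S⁻¹
  rw [hstar, hconj] at hlo hhi
  exact ⟨hlo, hhi⟩

end Matrix

lemma Finset.sup'_div_inf'_le {ι : Type*} {s : Finset ι} (hs : s.Nonempty) {f : ι → ℝ}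
    {a b : ℝ} (ha : 0 < a) (hf : ∀ i ∈ s, f i ∈ Set.Icc a b) :
    s.sup' hs f / s.inf' hs f ≤ b / a := by
  obtain ⟨i, hi⟩ := hs
  exact div_le_div₀ (ha.le.trans ((hf i hi).1.trans (hf i hi).2))
    (sup'_le _ _ fun j hj => (hf j hj).2) ha (le_inf' _ _ fun j hj => (hf j hj).1)

theorem preconditioned_condition_number_bound_general {n : ℕ} [NeZero n]
    (Kxx P : Matrix (Fin n) (Fin n) ℝ)
    (hP : P.PosSemidef)
    (σ ε : ℝ) (hσ : 0 < σ)
    (hEH : (Kxx - P).IsHermitian)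
    (hE : ∀ i : Fin n, |hEH.eigenvalues i| ≤ ε)
    (S : Matrix (Fin n) (Fin n) ℝ) (hS : S.IsSymm)
    (hSsq : S * S = P + σ ^ 2 • (1 : Matrix (Fin n) (Fin n) ℝ))
    (hM : (S⁻¹ * (Kxx + σ ^ 2 • (1 : Matrix (Fin n) (Fin n) ℝ)) * S⁻¹).IsHermitian) :
    (∀ i : Fin n, 1 - ε / σ ^ 2 ≤ hM.eigenvalues i ∧ hM.eigenvalues i ≤ 1 + ε / σ ^ 2) ∧
    (ε < σ ^ 2 →
      (Finset.univ.sup' Finset.univ_nonempty hM.eigenvalues) /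
          (Finset.univ.inf' Finset.univ_nonempty hM.eigenvalues)
        ≤ (1 + ε / σ ^ 2) / (1 - ε / σ ^ 2)) := by
  have hc : 0 < σ ^ 2 := pow_pos hσ 2
  have hε : 0 ≤ ε := (abs_nonneg _).trans (hE 0)
  have hKP : Kxx - P ∈ Set.Icc (-ε • 1) (ε • 1) :=
    hEH.mem_Icc_smul_one_iff.2 fun i => abs_le.1 (hE i)
  have hSu : IsUnit S :=
    isUnit_of_mul_isUnit_left (hSsq ▸ (PosDef.posSemidef_add hP (PosDef.one.smul hc)).isUnit)
  have hbounds := hM.mem_Icc_smul_one_iff.1 <|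
    (isHermitian_iff_isSymm.2 hS).inv_mul_mul_inv_mem_Icc hSu <|
      hSsq ▸ add_smul_one_mem_Icc_of_sub_mem_Icc hP.nonneg hc hε hKP
  exact ⟨hbounds, fun hlt =>
    sup'_div_inf'_le univ_nonempty (sub_pos.2 ((div_lt_one hc).2 hlt)) fun i _ => hbounds i⟩

/-- Conditioning of the preconditioned system.  Let `K = K_XX + σ² I` and `P̂ = P + σ² I` with
`K_XX`, `P` symmetric positive semidefinite, and `E = K_XX − P` with spectral norm (largest
absolute eigenvalue) at most `ε`.  If `S` is any symmetric square root of `P̂`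
(so `S⁻¹ K S⁻¹` plays the role of `P̂^{-1/2} K P̂^{-1/2}`), then every eigenvalue `λ` of
`S⁻¹ K S⁻¹` satisfies `1 − ε/σ² ≤ λ ≤ 1 + ε/σ²`; hence for `ε < σ²` the condition number
`κ(P̂⁻¹K)` (ratio of largest to smallest such eigenvalue) is at most
`(1 + ε/σ²)/(1 − ε/σ²)`. -/
theorem preconditioned_condition_number_bound {n : ℕ} [NeZero n]
    (Kxx P : Matrix (Fin n) (Fin n) ℝ)
    (hKxx : Kxx.PosSemidef) (hP : P.PosSemidef)
    (σ ε : ℝ) (hσ : 0 < σ)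
    (hEH : (Kxx - P).IsHermitian)
    (hE : ∀ i : Fin n, |hEH.eigenvalues i| ≤ ε)
    (S : Matrix (Fin n) (Fin n) ℝ) (hS : S.IsSymm)
    (hSsq : S * S = P + σ ^ 2 • (1 : Matrix (Fin n) (Fin n) ℝ))
    (hM : (S⁻¹ * (Kxx + σ ^ 2 • (1 : Matrix (Fin n) (Fin n) ℝ)) * S⁻¹).IsHermitian) :
    (∀ i : Fin n, 1 - ε / σ ^ 2 ≤ hM.eigenvalues i ∧ hM.eigenvalues i ≤ 1 + ε / σ ^ 2) ∧
    (ε < σ ^ 2 →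
      (Finset.univ.sup' Finset.univ_nonempty hM.eigenvalues) /
          (Finset.univ.inf' Finset.univ_nonempty hM.eigenvalues)
        ≤ (1 + ε / σ ^ 2) / (1 - ε / σ ^ 2)) :=
  preconditioned_condition_number_bound_general Kxx P hP σ ε hσ hEH hE S hS hSsq hM
end
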